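/- Let E be a complex Banach space, n, m ∈ ℕ, κ ≥ 1, ω₀ > 0, θ ∈ [0,π), and let (a_α)_{|α|≤m} ⊆ 𝓛(E) with Σ_{|α|≤m} ‖a_α‖ ≤ C₀. Set a(ξ) := Σ_{|α|≤m} a_α ξ^α for ξ ∈ ℝⁿ. Assume that for every λ ∈ ω₀ + Σ_θ and every ξ ∈ ℝⁿ, the operator λI + a(ξ) is invertible in 𝓛(E) with ‖(λI + a(ξ))^{−1}‖ ≤ 2κ/(|ξ|^m + |λ|). For λ ∈ ω₀ + Σ_θ define M_λ : ℤⁿ → 𝓛(E) by M_λ(k) := λ(λI + a(k))^{−1}. Then there exists a constant Ĉ > 0, independent of λ, such that for every λ ∈ ω₀ + Σ_θ, every k ∈ ℤⁿ and every γ ∈ {0,1}ⁿ: |k|^{|γ|} ‖(Δ^γ M_λ)(k)‖_{𝓛(E)} ≤ Ĉ, where Δ^γ is the composition of the backward difference operators (Δ^{δ_j} M)(k) := M(k) − M(k − δ_j) over those j with γ_j = 1 (and Δ^0 M := M). -/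

import Mathlib

/-- The sector `Σ_θ = {λ ∈ ℂ : |arg λ| ≤ θ} ∪ {0}`. -/
def sector (θ : ℝ) : Set ℂ := {z : ℂ | |Complex.arg z| ≤ θ} ∪ {0}

/-- The finite set of multi-indices `α ∈ ℕ₀ⁿ` with `|α| ≤ m`. -/
def multiIdxLe (n m : ℕ) : Finset (Fin n → ℕ) :=
  (Finset.Icc (0 : Fin n → ℕ) (fun _ => m)).filter (fun α => ∑ i, α i ≤ m)

/-- The symbol `Σ_{α ∈ A} a_α ξ^α` of a differential operator with
operator-valued coefficients. -/
noncomputable def opSymbol {n : ℕ} {E : Type*} [NormedAddCommGroup E] [NormedSpace ℂ E]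
    (A : Finset (Fin n → ℕ)) (a : (Fin n → ℕ) → (E →L[ℂ] E))
    (ξ : EuclideanSpace ℝ (Fin n)) : E →L[ℂ] E :=
  ∑ α ∈ A, (∏ i, (ξ i) ^ (α i)) • a α

/-- The canonical inclusion `ℤⁿ ⊆ ℝⁿ` (with the Euclidean structure). -/
noncomputable def zToR (n : ℕ) (k : Fin n → ℤ) : EuclideanSpace ℝ (Fin n) :=
  (WithLp.equiv 2 (Fin n → ℝ)).symm (fun i => (k i : ℝ))

/-- The Euclidean norm of an integer vector. -/
noncomputable def znorm (n : ℕ) (k : Fin n → ℤ) : ℝ :=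
  Real.sqrt (∑ i, ((k i : ℝ)) ^ 2)

/-- The backward difference operator `(Δ^{δ_j} M)(k) = M(k) - M(k - δ_j)`. -/
def bdiff {n : ℕ} {V : Type*} [AddCommGroup V] (j : Fin n)
    (M : (Fin n → ℤ) → V) : (Fin n → ℤ) → V :=
  fun k => M k - M (k - Pi.single j 1)

/-- `Δ^γ` for `γ ∈ {0,1}ⁿ`: the composition of the `Δ^{δ_j}` over those `j`
with `γ_j = 1` (and `Δ^0 M = M`). -/
def bdiffGamma {n : ℕ} {V : Type*} [AddCommGroup V] (γ : Fin n → Bool)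
    (M : (Fin n → ℤ) → V) : (Fin n → ℤ) → V :=
  ((List.finRange n).filter (fun j => γ j)).foldr bdiff M

namespace St18


variable {n : ℕ}

def sep (g : Fin n → ℤ → ℝ) : (Fin n → ℤ) → ℝ := fun k => ∏ i, g i (k i)

lemma sub_single_apply (k : Fin n → ℤ) (j i : Fin n) (hij : i ≠ j) :
    (k - Pi.single j 1 : Fin n → ℤ) i = k i := by
  simp [Pi.single_apply, hij]

lemma bdiff_sep (j : Fin n) (g : Fin n → ℤ → ℝ) :
    bdiff j (sep g) = sep (Function.update g j (fun x => g j x - g j (x - 1))) := by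
  funext k
  show sep g k - sep g (k - Pi.single j 1) = _
  set P : ℝ := ∏ i ∈ Finset.univ.erase j, g i (k i) with hP
  have hA : sep g k = g j (k j) * P := (Finset.mul_prod_erase _ _ (Finset.mem_univ j)).symm
  have hB : sep g (k - Pi.single j 1) = g j (k j - 1) * P := by
    rw [sep, ← Finset.mul_prod_erase _ _ (Finset.mem_univ j)]
    have : (k - Pi.single j 1 : Fin n → ℤ) j = k j - 1 := by simp
    rw [this]
    congr 1
    apply Finset.prod_congr rfl
    intro i hi
    rw [sub_single_apply k j i (Finset.ne_of_mem_erase hi)]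
  have hC : sep (Function.update g j (fun x => g j x - g j (x - 1))) k
      = (g j (k j) - g j (k j - 1)) * P := by
    rw [sep, ← Finset.mul_prod_erase _ _ (Finset.mem_univ j), Function.update_self]
    congr 1
    apply Finset.prod_congr rfl
    intro i hi
    rw [Function.update_of_ne (Finset.ne_of_mem_erase hi)]
  rw [hA, hB, hC]; ring

lemma foldr_sep (L : List (Fin n)) (hL : L.Nodup) (g : Fin n → ℤ → ℝ) :
    L.foldr bdiff (sep g)
      = sep (fun i => if i ∈ L then (fun x => g i x - g i (x - 1)) else g i) := by
  induction L with
  | nil => simp [sep]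
  | cons j L' ih =>
    have hj : j ∉ L' := (List.nodup_cons.mp hL).1
    have hL' : L'.Nodup := (List.nodup_cons.mp hL).2
    rw [List.foldr_cons, ih hL', bdiff_sep]
    apply congrArg sep
    funext i
    by_cases hij : i = j
    · subst hij
      simp [Function.update_self, hj]
    · rw [Function.update_of_ne hij]
      by_cases hiL : i ∈ L' <;> simp [hij, hiL]

lemma pow_diff_bound (y : ℝ) (a : ℕ) :
    |y ^ a - (y - 1) ^ a| ≤ (a : ℝ) * (1 + |y|) ^ (a - 1) := by
  have h := geom_sum₂_mul y (y - 1) a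
  rw [show y - (y - 1) = 1 by ring, mul_one] at h
  rw [← h]
  calc |∑ i ∈ Finset.range a, y ^ i * (y - 1) ^ (a - 1 - i)|
      ≤ ∑ i ∈ Finset.range a, |y ^ i * (y - 1) ^ (a - 1 - i)| := Finset.abs_sum_le_sum_abs _ _
    _ ≤ ∑ _i ∈ Finset.range a, (1 + |y|) ^ (a - 1) := by
        apply Finset.sum_le_sum
        intro i hi
        rw [abs_mul, abs_pow, abs_pow]
        have h1 : |y| ^ i ≤ (1 + |y|) ^ i :=
          pow_le_pow_left₀ (abs_nonneg y) (by linarith) i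
        have h2 : |y - 1| ^ (a - 1 - i) ≤ (1 + |y|) ^ (a - 1 - i) :=
          pow_le_pow_left₀ (abs_nonneg _)
            (by cases abs_cases y <;> cases abs_cases (y - 1) <;> linarith) _
        calc |y| ^ i * |y - 1| ^ (a - 1 - i) ≤ (1 + |y|) ^ i * (1 + |y|) ^ (a - 1 - i) :=
              mul_le_mul h1 h2 (pow_nonneg (abs_nonneg _) _) (pow_nonneg (by positivity) _)
          _ = (1 + |y|) ^ (a - 1) := by
              rw [← pow_add]
              congr 1
              have := Finset.mem_range.mp hi
              omega
    _ = (a : ℝ) * (1 + |y|) ^ (a - 1) := by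
        rw [Finset.sum_const, Finset.card_range, nsmul_eq_mul]


lemma zToR_apply (n : ℕ) (k : Fin n → ℤ) (i : Fin n) : zToR n k i = (k i : ℝ) := rfl

lemma znorm_eq (n : ℕ) (k : Fin n → ℤ) : znorm n k = ‖zToR n k‖ := by
  rw [EuclideanSpace.norm_eq, znorm]
  congr 1
  apply Finset.sum_congr rfl
  intro i _
  rw [zToR_apply]
  rw [Real.norm_eq_abs, sq_abs]

lemma zToR_sub (n : ℕ) (k v : Fin n → ℤ) : zToR n (k - v) = zToR n k - zToR n v := by
  apply (WithLp.equiv 2 (Fin n → ℝ)).injective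
  funext i
  simp [zToR]

lemma znorm_nonneg (n : ℕ) (k : Fin n → ℤ) : 0 ≤ znorm n k := Real.sqrt_nonneg _

lemma abs_coord_le_znorm (n : ℕ) (k : Fin n → ℤ) (i : Fin n) : |(k i : ℝ)| ≤ znorm n k := by
  rw [← Real.sqrt_sq_eq_abs]
  apply Real.sqrt_le_sqrt
  exact Finset.single_le_sum (f := fun i => ((k i : ℝ)) ^ 2) (fun i _ => sq_nonneg _) (Finset.mem_univ i)

lemma znorm_le (n : ℕ) (v : Fin n → ℤ) (c : ℝ) (hc : 0 ≤ c) (hv : ∀ i, |(v i : ℝ)| ≤ c) :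
    znorm n v ≤ Real.sqrt n * c := by
  rw [znorm, ← Real.sqrt_sq hc, ← Real.sqrt_mul (by positivity)]
  apply Real.sqrt_le_sqrt
  calc ∑ i, ((v i : ℝ)) ^ 2 ≤ ∑ _i : Fin n, c ^ 2 := by
        apply Finset.sum_le_sum
        intro i _
        rw [← sq_abs]
        exact pow_le_pow_left₀ (abs_nonneg _) (hv i) 2
    _ = n * c ^ 2 := by rw [Finset.sum_const, Finset.card_univ, Fintype.card_fin, nsmul_eq_mul]

lemma alpha_le (n m : ℕ) (α : Fin n → ℕ) (hα : α ∈ multiIdxLe n m) (i : Fin n) : α i ≤ m := by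
  have h := (Finset.mem_filter.mp hα).2
  exact le_trans (Finset.single_le_sum (f := fun i => α i) (fun _ _ => Nat.zero_le _)
    (Finset.mem_univ i)) h

lemma alpha_sum_le (n m : ℕ) (α : Fin n → ℕ) (hα : α ∈ multiIdxLe n m) : ∑ i, α i ≤ m :=
  (Finset.mem_filter.mp hα).2


variable {n : ℕ} {E : Type*} [NormedAddCommGroup E] [NormedSpace ℂ E]


/-- the scalar coefficient functions: `g i x = ((x - w i : ℤ) : ℝ) ^ (α i)` -/
def gmon (α : Fin n → ℕ) (w : Fin n → ℤ) : Fin n → ℤ → ℝ :=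
  fun i x => ((x - w i : ℤ) : ℝ) ^ (α i)

noncomputable def asymb (n m : ℕ) (a : (Fin n → ℕ) → (E →L[ℂ] E)) (k : Fin n → ℤ) :
    E →L[ℂ] E := opSymbol (multiIdxLe n m) a (zToR n k)

noncomputable def gfun (n m : ℕ) (a : (Fin n → ℕ) → (E →L[ℂ] E)) (L : List (Fin n))
    (w : Fin n → ℤ) : (Fin n → ℤ) → (E →L[ℂ] E) :=
  L.foldr bdiff (fun k => asymb n m a (k - w))

lemma asymb_shift (nn mm : ℕ) (a : (Fin nn → ℕ) → (E →L[ℂ] E)) (w k : Fin nn → ℤ) :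
    asymb nn mm a (k - w) = ∑ α ∈ multiIdxLe nn mm, sep (gmon α w) k • a α := by
  rfl

/-- foldr bdiff commutes with finite sums of scalar-function • fixed-operator -/
lemma foldr_bdiff_sum_smul {ι : Type*} (A : Finset ι) (L : List (Fin n))
    (f : ι → (Fin n → ℤ) → ℝ) (b : ι → (E →L[ℂ] E)) :
    L.foldr bdiff (fun k => ∑ α ∈ A, f α k • b α)
      = fun k => ∑ α ∈ A, (L.foldr bdiff (f α)) k • b α := by
  induction L with
  | nil => rfl
  | cons j L' ih =>
    rw [List.foldr_cons, ih]
    funext k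
    show (∑ α ∈ A, (L'.foldr bdiff (f α)) k • b α)
        - (∑ α ∈ A, (L'.foldr bdiff (f α)) (k - Pi.single j 1) • b α) = _
    rw [← Finset.sum_sub_distrib]
    apply Finset.sum_congr rfl
    intro α _
    rw [← sub_smul]
    rfl


noncomputable def uu (n : ℕ) (k : Fin n → ℤ) : ℝ := (1 + n + n ^ 2 : ℝ) + znorm n k

lemma one_le_uu (n : ℕ) (k : Fin n → ℤ) : 1 ≤ uu n k := by
  have h := znorm_nonneg n k
  have : (0:ℝ) ≤ (n:ℝ) := Nat.cast_nonneg n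
  have : (0:ℝ) ≤ (n:ℝ)^2 := by positivity
  unfold uu; linarith [Nat.cast_nonneg (α := ℝ) n]

lemma coord_le_uu (n : ℕ) (k : Fin n → ℤ) (w : Fin n → ℤ)
    (hw : ∀ i, |(w i : ℝ)| ≤ (n : ℝ)) (i : Fin n) :
    1 + |((k i - w i : ℤ) : ℝ)| ≤ uu n k := by
  have h1 : |((k i - w i : ℤ) : ℝ)| ≤ |(k i : ℝ)| + |(w i : ℝ)| := by
    push_cast
    exact abs_sub _ _
  have h2 := abs_coord_le_znorm n k i
  have h3 := hw i
  have : (0:ℝ) ≤ (n:ℝ)^2 := by positivity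
  unfold uu; linarith

lemma mon_diff_bound (n m : ℕ) (L : List (Fin n)) (hL : L.Nodup) (α : Fin n → ℕ)
    (hα : α ∈ multiIdxLe n m) (w : Fin n → ℤ) (hw : ∀ i, |(w i : ℝ)| ≤ (n : ℝ))
    (k : Fin n → ℤ) :
    uu n k ^ L.length * |L.foldr bdiff (sep (gmon α w)) k| ≤
      ((m : ℝ) + 1) ^ n * uu n k ^ m := by
  rw [foldr_sep L hL]
  set z := uu n k with hzdef
  have hz1 : 1 ≤ z := one_le_uu n k
  have hz0 : 0 ≤ z := le_trans zero_le_one hz1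
  set h : Fin n → ℤ → ℝ :=
    fun i => if i ∈ L then (fun x => gmon α w i x - gmon α w i (x - 1)) else gmon α w i with hdef
  show z ^ L.length * |sep h k| ≤ ((m : ℝ) + 1) ^ n * z ^ m
  have habs : |sep h k| = ∏ i, |h i (k i)| := by
    rw [sep, Finset.abs_prod]
  by_cases hzero : ∃ i ∈ L, α i = 0
  · obtain ⟨i, hiL, hαi⟩ := hzero
    have : h i (k i) = 0 := by
      simp only [hdef, if_pos hiL, gmon, hαi, pow_zero]
      ring
    have : |sep h k| = 0 := by
      rw [habs]
      apply Finset.prod_eq_zero (Finset.mem_univ i)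
      rw [this, abs_zero]
    rw [this, mul_zero]
    positivity
  · push_neg at hzero
    set S := L.toFinset with hSdef
    have hmemS : ∀ i : Fin n, i ∈ S ↔ i ∈ L := fun i => List.mem_toFinset
    have hcard : S.card = L.length := List.toFinset_card_of_nodup hL
    have hSn : S.card ≤ n := by
      calc S.card = L.length := hcard
        _ ≤ Fintype.card (Fin n) := hL.length_le_card
        _ = n := Fintype.card_fin n
    -- pointwise bounds
    have hbS : ∀ i ∈ S, z * |h i (k i)| ≤ (m : ℝ) * z ^ (α i) := by
      intro i hi
      have hiL := (hmemS i).mp hi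
      have hαi : 1 ≤ α i := Nat.one_le_iff_ne_zero.mpr (hzero i hiL)
      have : h i (k i) = ((k i - w i : ℤ) : ℝ) ^ (α i) - (((k i - w i : ℤ) : ℝ) - 1) ^ (α i) := by
        simp only [hdef, if_pos hiL, gmon]
        congr 2
        push_cast
        ring
      rw [this]
      have hd := pow_diff_bound ((k i - w i : ℤ) : ℝ) (α i)
      have hy : 1 + |((k i - w i : ℤ) : ℝ)| ≤ z := coord_le_uu n k w hw i
      have hyp : (1 + |((k i - w i : ℤ) : ℝ)|) ^ (α i - 1) ≤ z ^ (α i - 1) :=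
        pow_le_pow_left₀ (by positivity) hy _
      have hαm : (α i : ℝ) ≤ (m : ℝ) := Nat.cast_le.mpr (alpha_le n m α hα i)
      calc z * |_ ^ (α i) - _ ^ (α i)| ≤ z * ((α i : ℝ) * (1 + |((k i - w i : ℤ) : ℝ)|) ^ (α i - 1)) := by
            apply mul_le_mul_of_nonneg_left hd hz0
        _ ≤ z * ((m : ℝ) * z ^ (α i - 1)) := by
            apply mul_le_mul_of_nonneg_left _ hz0
            apply mul_le_mul hαm hyp (by positivity) (by positivity)
        _ = (m : ℝ) * (z * z ^ (α i - 1)) := by ring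
        _ = (m : ℝ) * z ^ (α i) := by
            congr 1
            rw [← pow_succ']
            congr 1
            omega
    have hbC : ∀ i ∈ Sᶜ, |h i (k i)| ≤ z ^ (α i) := by
      intro i hi
      have hiL : i ∉ L := fun hmem => (Finset.mem_compl.mp hi) ((hmemS i).mpr hmem)
      have : h i (k i) = ((k i - w i : ℤ) : ℝ) ^ (α i) := by
        simp only [hdef, if_neg hiL, gmon]
      rw [this, abs_pow]
      apply pow_le_pow_left₀ (abs_nonneg _)
      have := coord_le_uu n k w hw i
      linarith
    -- assemble
    have hsplit : z ^ L.length * |sep h k| =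
        (∏ i ∈ S, z * |h i (k i)|) * ∏ i ∈ Sᶜ, |h i (k i)| := by
      rw [habs, ← Finset.prod_mul_prod_compl S (fun i => |h i (k i)|), Finset.prod_mul_distrib,
        Finset.prod_const, hcard]
      ring
    rw [hsplit]
    calc (∏ i ∈ S, z * |h i (k i)|) * ∏ i ∈ Sᶜ, |h i (k i)|
        ≤ (∏ i ∈ S, (m : ℝ) * z ^ (α i)) * ∏ i ∈ Sᶜ, z ^ (α i) := by
          apply mul_le_mul
          · exact Finset.prod_le_prod (fun i _ => by positivity) hbS
          · exact Finset.prod_le_prod (fun i _ => abs_nonneg _) hbC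
          · exact Finset.prod_nonneg (fun i _ => abs_nonneg _)
          · exact Finset.prod_nonneg (fun i _ => by positivity)
      _ = (m : ℝ) ^ S.card * ((∏ i ∈ S, z ^ (α i)) * ∏ i ∈ Sᶜ, z ^ (α i)) := by
          rw [Finset.prod_mul_distrib, Finset.prod_const]
          ring
      _ = (m : ℝ) ^ S.card * z ^ (∑ i, α i) := by
          rw [Finset.prod_mul_prod_compl S (fun i => z ^ (α i)), Finset.prod_pow_eq_pow_sum]
      _ ≤ ((m : ℝ) + 1) ^ n * z ^ m := by
          apply mul_le_mul
          · calc (m : ℝ) ^ S.card ≤ ((m : ℝ) + 1) ^ S.card :=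
                  pow_le_pow_left₀ (Nat.cast_nonneg m) (by linarith) _
              _ ≤ ((m : ℝ) + 1) ^ n :=
                  pow_le_pow_right₀ (by linarith [Nat.cast_nonneg (α := ℝ) m]) hSn
          · exact pow_le_pow_right₀ hz1 (alpha_sum_le n m α hα)
          · positivity
          · positivity

lemma gfun_bound {E : Type*} [NormedAddCommGroup E] [NormedSpace ℂ E]
    (n m : ℕ) (a : (Fin n → ℕ) → (E →L[ℂ] E)) (C₀ : ℝ)
    (ha : ∑ α ∈ multiIdxLe n m, ‖a α‖ ≤ C₀)
    (L : List (Fin n)) (hL : L.Nodup) (w : Fin n → ℤ)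
    (hw : ∀ i, |(w i : ℝ)| ≤ (n : ℝ)) (k : Fin n → ℤ) :
    uu n k ^ L.length * ‖gfun n m a L w k‖ ≤
      (((m : ℝ) + 1) ^ n * C₀) * uu n k ^ m := by
  have hrepr : gfun n m a L w =
      fun k => ∑ α ∈ multiIdxLe n m, (L.foldr bdiff (sep (gmon α w))) k • a α := by
    unfold gfun
    rw [show (fun k => asymb n m a (k - w)) =
        (fun k => ∑ α ∈ multiIdxLe n m, sep (gmon α w) k • a α) from
      funext (asymb_shift n m a w)]
    exact foldr_bdiff_sum_smul _ _ _ _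
  rw [hrepr]
  have hz0 : (0:ℝ) ≤ uu n k := le_trans zero_le_one (one_le_uu n k)
  calc uu n k ^ L.length * ‖∑ α ∈ multiIdxLe n m, (L.foldr bdiff (sep (gmon α w))) k • a α‖
      ≤ uu n k ^ L.length * ∑ α ∈ multiIdxLe n m, |(L.foldr bdiff (sep (gmon α w))) k| * ‖a α‖ := by
        apply mul_le_mul_of_nonneg_left _ (by positivity)
        calc ‖∑ α ∈ multiIdxLe n m, (L.foldr bdiff (sep (gmon α w))) k • a α‖
            ≤ ∑ α ∈ multiIdxLe n m, ‖(L.foldr bdiff (sep (gmon α w))) k • a α‖ :=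
              norm_sum_le _ _
          _ = ∑ α ∈ multiIdxLe n m, |(L.foldr bdiff (sep (gmon α w))) k| * ‖a α‖ := by
              apply Finset.sum_congr rfl
              intro α _
              rw [← Real.norm_eq_abs]
              exact norm_smul (List.foldr bdiff (sep (gmon α w)) L k) (a α)
    _ = ∑ α ∈ multiIdxLe n m, (uu n k ^ L.length * |(L.foldr bdiff (sep (gmon α w))) k|) * ‖a α‖ := by
        rw [Finset.mul_sum]
        apply Finset.sum_congr rfl
        intro α _
        ring
    _ ≤ ∑ α ∈ multiIdxLe n m, (((m : ℝ) + 1) ^ n * uu n k ^ m) * ‖a α‖ := by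
        apply Finset.sum_le_sum
        intro α hα
        apply mul_le_mul_of_nonneg_right (mon_diff_bound n m L hL α hα w hw k) (norm_nonneg _)
    _ = (((m : ℝ) + 1) ^ n * uu n k ^ m) * ∑ α ∈ multiIdxLe n m, ‖a α‖ := by
        rw [Finset.mul_sum]
    _ ≤ (((m : ℝ) + 1) ^ n * uu n k ^ m) * C₀ := by
        apply mul_le_mul_of_nonneg_left ha (by positivity)
    _ = (((m : ℝ) + 1) ^ n * C₀) * uu n k ^ m := by ring

section
variable {E : Type*} [NormedAddCommGroup E] [NormedSpace ℂ E] {n : ℕ}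

lemma st18_inv_sub_inv (x y : E →L[ℂ] E) (hx : IsUnit x) (hy : IsUnit y) :
    Ring.inverse x - Ring.inverse y = Ring.inverse x * ((y - x) * Ring.inverse y) := by
  obtain ⟨u, rfl⟩ := hx
  obtain ⟨w, rfl⟩ := hy
  rw [Ring.inverse_unit, Ring.inverse_unit, sub_mul, mul_sub]
  simp only [← mul_assoc, Units.inv_mul, one_mul]
  simp only [mul_assoc, Units.mul_inv, mul_one]

lemma bdiff_mul' (j : Fin n) (F G : (Fin n → ℤ) → (E →L[ℂ] E)) (k : Fin n → ℤ) :
    bdiff j (fun k => F k * G k) k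
      = bdiff j F k * G k + F (k - Pi.single j 1) * bdiff j G k := by
  show F k * G k - F (k - Pi.single j 1) * G (k - Pi.single j 1)
    = (F k - F (k - Pi.single j 1)) * G k
      + F (k - Pi.single j 1) * (G k - G (k - Pi.single j 1))
  rw [sub_mul, mul_sub]
  abel

lemma bdiff_smul' {V : Type*} [AddCommGroup V] [Module ℂ V] (j : Fin n) (c : ℂ)
    (F : (Fin n → ℤ) → V) :
    bdiff j (fun k => c • F k) = fun k => c • bdiff j F k := by
  funext k
  show c • F k - c • F (k - Pi.single j 1) = _
  rw [← smul_sub]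
  rfl

lemma foldr_bdiff_smul {V : Type*} [AddCommGroup V] [Module ℂ V] (L : List (Fin n)) (c : ℂ)
    (F : (Fin n → ℤ) → V) :
    L.foldr bdiff (fun k => c • F k) = fun k => c • L.foldr bdiff F k := by
  induction L with
  | nil => rfl
  | cons j L' ih => rw [List.foldr_cons, ih, List.foldr_cons, bdiff_smul']

lemma foldr_bdiff_shift {V : Type*} [AddCommGroup V] (L : List (Fin n)) (v : Fin n → ℤ)
    (F : (Fin n → ℤ) → V) (k : Fin n → ℤ) :
    (L.foldr bdiff F) (k - v) = (L.foldr bdiff (fun k' => F (k' - v))) k := by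
  induction L generalizing k with
  | nil => rfl
  | cons j L' ih =>
    show (L'.foldr bdiff F) (k - v) - (L'.foldr bdiff F) (k - v - Pi.single j 1) = _
    rw [sub_right_comm k v (Pi.single j 1), ih k, ih (k - Pi.single j 1)]
    rfl

lemma mul_list_sum' (x y : E →L[ℂ] E) (l : List (E →L[ℂ] E)) :
    x * (y * l.sum) = (l.map (fun b => x * (y * b))).sum := by
  induction l with
  | nil => simp
  | cons b l ih => rw [List.sum_cons, List.map_cons, List.sum_cons, ← ih, mul_add, mul_add]

lemma list_norm_sum_le (l : List ((Fin n → ℤ) → (E →L[ℂ] E))) (k : Fin n → ℤ) :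
    ‖(l.map (fun T => T k)).sum‖ ≤ (l.map (fun T => ‖T k‖)).sum := by
  induction l with
  | nil => simp
  | cons T l ih =>
    simp only [List.map_cons, List.sum_cons]
    exact le_trans (norm_add_le _ _) (by linarith)

end

-- chunk B: to be appended inside namespace St18 of full.lean (uses defs from full.lean)
section
variable {E : Type*} [NormedAddCommGroup E] [NormedSpace ℂ E]

noncomputable def Rres (n m : ℕ) (a : (Fin n → ℕ) → (E →L[ℂ] E)) (lam : ℂ)
    (k : Fin n → ℤ) : E →L[ℂ] E :=
  Ring.inverse (lam • (1 : E →L[ℂ] E) + asymb n m a k)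

lemma Rres_diff (n m : ℕ) (a : (Fin n → ℕ) → (E →L[ℂ] E)) (lam : ℂ)
    (hU : ∀ k : Fin n → ℤ, IsUnit (lam • (1 : E →L[ℂ] E) + asymb n m a k))
    (x y : Fin n → ℤ) :
    Rres n m a lam x - Rres n m a lam y
      = Rres n m a lam x * ((asymb n m a y - asymb n m a x) * Rres n m a lam y) := by
  unfold Rres
  rw [st18_inv_sub_inv _ _ (hU x) (hU y)]
  congr 2
  abel

inductive Good (n m : ℕ) (a : (Fin n → ℕ) → (E →L[ℂ] E)) (lam : ℂ) (c : ℕ) :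
    List (Fin n) → ((Fin n → ℤ) → (E →L[ℂ] E)) → Prop
  | base (v : Fin n → ℤ) (hv : ∀ i, |(v i : ℝ)| ≤ (c : ℝ)) :
      Good n m a lam c [] (fun k => Rres n m a lam (k - v))
  | cons (v w : Fin n → ℤ) (ε : ℂ) (L M : List (Fin n)) (F : (Fin n → ℤ) → (E →L[ℂ] E))
      (hv : ∀ i, |(v i : ℝ)| ≤ (c : ℝ)) (hw : ∀ i, |(w i : ℝ)| ≤ (c : ℝ)) (hε : ‖ε‖ = 1)
      (hL : L ≠ []) (hF : Good n m a lam c M F) :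
      Good n m a lam c (L ++ M)
        (fun k => Rres n m a lam (k - v) * (ε • gfun n m a L w k * F k))

lemma good_mono {n m : ℕ} {a : (Fin n → ℕ) → (E →L[ℂ] E)} {lam : ℂ} {c c' : ℕ}
    (hcc : c ≤ c') {M : List (Fin n)} {F : (Fin n → ℤ) → (E →L[ℂ] E)}
    (h : Good n m a lam c M F) : Good n m a lam c' M F := by
  have hR : (c : ℝ) ≤ (c' : ℝ) := Nat.cast_le.mpr hcc
  induction h with
  | base v hv => exact Good.base v (fun i => le_trans (hv i) hR)
  | cons v w ε L M F hv hw hε hL hF ih =>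
    exact Good.cons v w ε L M F (fun i => le_trans (hv i) hR)
      (fun i => le_trans (hw i) hR) hε hL ih

lemma single_abs_le (n : ℕ) (j i : Fin n) : |((Pi.single j 1 : Fin n → ℤ) i : ℝ)| ≤ 1 := by
  by_cases hij : i = j
  · subst hij; simp
  · simp [Pi.single_apply, hij]

lemma add_single_abs_le (n : ℕ) (c : ℕ) (v : Fin n → ℤ) (hv : ∀ i, |(v i : ℝ)| ≤ (c : ℝ))
    (j i : Fin n) : |((v + Pi.single j 1 : Fin n → ℤ) i : ℝ)| ≤ ((c + 1 : ℕ) : ℝ) := by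
  have h1 : ((v + Pi.single j 1 : Fin n → ℤ) i : ℝ) = (v i : ℝ) + ((Pi.single j 1 : Fin n → ℤ) i : ℝ) := by
    have : (v + Pi.single j 1 : Fin n → ℤ) i = v i + (Pi.single j 1 : Fin n → ℤ) i := rfl
    rw [this]
    push_cast
    ring
  rw [h1]
  push_cast
  calc |(v i : ℝ) + ((Pi.single j 1 : Fin n → ℤ) i : ℝ)|
      ≤ |(v i : ℝ)| + |((Pi.single j 1 : Fin n → ℤ) i : ℝ)| := abs_add_le _ _
    _ ≤ (c : ℝ) + 1 := add_le_add (hv i) (single_abs_le n j i)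

end

section
variable {E : Type*} [NormedAddCommGroup E] [NormedSpace ℂ E]

lemma gfun_shift_single {n m : ℕ} (a : (Fin n → ℕ) → (E →L[ℂ] E)) (L : List (Fin n))
    (w : Fin n → ℤ) (j : Fin n) (k : Fin n → ℤ) :
    gfun n m a L w (k - Pi.single j 1) = gfun n m a L (w + Pi.single j 1) k := by
  unfold gfun
  rw [foldr_bdiff_shift]
  have h : (fun k' => asymb n m a (k' - Pi.single j 1 - w))
      = (fun k' : Fin n → ℤ => asymb n m a (k' - (w + Pi.single j 1))) := by
    funext k'
    rw [sub_sub, add_comm]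
  rw [h]

lemma bdiff_Rres_shift {n m : ℕ} (a : (Fin n → ℕ) → (E →L[ℂ] E)) (lam : ℂ)
    (hU : ∀ k : Fin n → ℤ, IsUnit (lam • (1 : E →L[ℂ] E) + asymb n m a k))
    (j : Fin n) (v k : Fin n → ℤ) :
    bdiff j (fun k' => Rres n m a lam (k' - v)) k
      = Rres n m a lam (k - v) *
          (-(gfun n m a [j] v k) * Rres n m a lam (k - (v + Pi.single j 1))) := by
  have h1 : k - Pi.single j 1 - v = k - (v + Pi.single j 1) := by
    rw [sub_sub, add_comm]
  have h2 : bdiff j (fun k' => Rres n m a lam (k' - v)) k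
      = Rres n m a lam (k - v) - Rres n m a lam (k - (v + Pi.single j 1)) := by
    show Rres n m a lam (k - v) - Rres n m a lam (k - Pi.single j 1 - v) = _
    rw [h1]
  rw [h2, Rres_diff n m a lam hU]
  have h3 : asymb n m a (k - (v + Pi.single j 1)) - asymb n m a (k - v)
      = -(gfun n m a [j] v k) := by
    show _ = -(asymb n m a (k - v) - asymb n m a (k - Pi.single j 1 - v))
    rw [h1]
    abel
  rw [h3]

lemma good_bdiff {n m : ℕ} {a : (Fin n → ℕ) → (E →L[ℂ] E)} {lam : ℂ}
    (hU : ∀ k : Fin n → ℤ, IsUnit (lam • (1 : E →L[ℂ] E) + asymb n m a k))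
    (j : Fin n) {c : ℕ} {M : List (Fin n)} {F : (Fin n → ℤ) → (E →L[ℂ] E)}
    (hF : Good n m a lam c M F) :
    ∃ l : List ((Fin n → ℤ) → (E →L[ℂ] E)),
      (∀ k, bdiff j F k = (l.map (fun T => T k)).sum) ∧
      l.length ≤ 2 * M.length + 1 ∧
      ∀ T ∈ l, ∃ M', M'.Perm (j :: M) ∧ Good n m a lam (c + 1) M' T := by
  have hcc : (c : ℝ) ≤ ((c + 1 : ℕ) : ℝ) := by push_cast; linarith
  induction hF with
  | base v hv =>
    refine ⟨[fun k => Rres n m a lam (k - v) * ((-1 : ℂ) • gfun n m a [j] v k *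
        Rres n m a lam (k - (v + Pi.single j 1)))], ?_, by simp, ?_⟩
    · intro k
      rw [bdiff_Rres_shift a lam hU j v k]
      simp [neg_smul, one_smul]
    · intro T hT
      rw [List.mem_singleton] at hT
      subst hT
      refine ⟨[j], List.Perm.refl _, ?_⟩
      exact Good.cons v v (-1) [j] [] _ (fun i => le_trans (hv i) hcc)
        (fun i => le_trans (hv i) hcc) (by simp) (by simp)
        (Good.base (v + Pi.single j 1) (add_single_abs_le n c v hv j))
  | cons v w ε L M F hv hw hε hL hF ih =>
    obtain ⟨lF, hlF, hlen, hterms⟩ := ih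
    refine ⟨(fun k => Rres n m a lam (k - v) * ((-1 : ℂ) • gfun n m a [j] v k *
          (Rres n m a lam (k - (v + Pi.single j 1)) * (ε • gfun n m a L w k * F k)))) ::
        (fun k => Rres n m a lam (k - (v + Pi.single j 1)) *
          (ε • gfun n m a (j :: L) w k * F k)) ::
        lF.map (fun T k => Rres n m a lam (k - (v + Pi.single j 1)) *
          (ε • gfun n m a L (w + Pi.single j 1) k * T k)), ?_, ?_, ?_⟩
    · intro k
      have h1 : k - Pi.single j 1 - v = k - (v + Pi.single j 1) := by
        rw [sub_sub, add_comm]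
      have hg1 : bdiff j (fun k' => ε • gfun n m a L w k') k
          = ε • gfun n m a (j :: L) w k := congrFun (bdiff_smul' j ε (gfun n m a L w)) k
      have hg2 : ε • gfun n m a L w (k - Pi.single j 1)
          = ε • gfun n m a L (w + Pi.single j 1) k := by
        rw [gfun_shift_single]
      calc bdiff j (fun k' => Rres n m a lam (k' - v) * (ε • gfun n m a L w k' * F k')) k
          = bdiff j (fun k' => Rres n m a lam (k' - v)) k * (ε • gfun n m a L w k * F k)
            + Rres n m a lam (k - Pi.single j 1 - v) *
              bdiff j (fun k' => ε • gfun n m a L w k' * F k') k := bdiff_mul' j _ _ k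
        _ = (Rres n m a lam (k - v) * (-(gfun n m a [j] v k) *
              Rres n m a lam (k - (v + Pi.single j 1)))) * (ε • gfun n m a L w k * F k)
            + Rres n m a lam (k - (v + Pi.single j 1)) *
              ((ε • gfun n m a (j :: L) w k) * F k
                + (ε • gfun n m a L (w + Pi.single j 1) k) *
                  ((lF.map (fun T => T k)).sum)) := by
            rw [bdiff_Rres_shift a lam hU j v k, h1]
            congr 2
            calc bdiff j (fun k' => ε • gfun n m a L w k' * F k') k
                = bdiff j (fun k' => ε • gfun n m a L w k') k * F k
                  + (ε • gfun n m a L w (k - Pi.single j 1)) * bdiff j F k :=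
                  bdiff_mul' j _ _ k
              _ = _ := by rw [hg1, hg2, hlF k]
        _ = _ := by
            simp only [List.map_cons, List.sum_cons, List.map_map, mul_add]
            rw [mul_list_sum' (Rres n m a lam (k - (v + Pi.single j 1)))
              (ε • gfun n m a L (w + Pi.single j 1) k) (lF.map (fun T => T k)),
              List.map_map]
            simp only [neg_smul, one_smul, neg_mul, mul_neg, mul_assoc]
            rfl
    · simp only [List.length_cons, List.length_map, List.length_append]
      have h1 : 1 ≤ L.length := List.length_pos_iff.mpr hL
      omega
    · intro T hT
      simp only [List.mem_cons] at hT
      rcases hT with rfl | rfl | hT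
      · refine ⟨j :: (L ++ M), List.Perm.refl _, ?_⟩
        exact Good.cons v v (-1) [j] (L ++ M) _ (fun i => le_trans (hv i) hcc)
          (fun i => le_trans (hv i) hcc) (by simp) (by simp)
          (Good.cons (v + Pi.single j 1) w ε L M F (add_single_abs_le n c v hv j)
            (fun i => le_trans (hw i) hcc) hε hL (good_mono (Nat.le_succ c) hF))
      · refine ⟨j :: (L ++ M), List.Perm.refl _, ?_⟩
        exact Good.cons (v + Pi.single j 1) w ε (j :: L) M F (add_single_abs_le n c v hv j)
          (fun i => le_trans (hw i) hcc) hε (by simp) (good_mono (Nat.le_succ c) hF)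
      · obtain ⟨T₀, hT₀mem, rfl⟩ := List.mem_map.mp hT
        obtain ⟨M₀, hM₀perm, hM₀good⟩ := hterms T₀ hT₀mem
        refine ⟨L ++ M₀, (List.Perm.append_left L hM₀perm).trans List.perm_middle, ?_⟩
        exact Good.cons (v + Pi.single j 1) (w + Pi.single j 1) ε L M₀ T₀
          (add_single_abs_le n c v hv j) (add_single_abs_le n c w hw j) hε hL hM₀good
end

section
variable {E : Type*} [NormedAddCommGroup E] [NormedSpace ℂ E]

lemma bdiff_list_sum {n : ℕ} (j : Fin n) (l : List ((Fin n → ℤ) → (E →L[ℂ] E)))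
    (k : Fin n → ℤ) :
    (l.map (fun T => bdiff j T k)).sum
      = (l.map (fun T => T k)).sum - (l.map (fun T => T (k - Pi.single j 1))).sum := by
  induction l with
  | nil => simp
  | cons T l ih =>
    simp only [List.map_cons, List.sum_cons, ih]
    show T k - T (k - Pi.single j 1) + _ = _
    abel

lemma expand_flat {n : ℕ} (j : Fin n) (P : ((Fin n → ℤ) → (E →L[ℂ] E)) → Prop) (B : ℕ)
    (l : List ((Fin n → ℤ) → (E →L[ℂ] E)))
    (h : ∀ T ∈ l, ∃ lT : List ((Fin n → ℤ) → (E →L[ℂ] E)),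
      (∀ k, bdiff j T k = (lT.map (fun T' => T' k)).sum) ∧ lT.length ≤ B ∧ ∀ T' ∈ lT, P T') :
    ∃ l' : List ((Fin n → ℤ) → (E →L[ℂ] E)),
      (∀ k, (l.map (fun T => bdiff j T k)).sum = (l'.map (fun T' => T' k)).sum) ∧
      l'.length ≤ B * l.length ∧ ∀ T' ∈ l', P T' := by
  induction l with
  | nil => exact ⟨[], by simp, by simp, by simp⟩
  | cons T l ih =>
    obtain ⟨lT, hlT, hlenT, hPT⟩ := h T List.mem_cons_self
    obtain ⟨l', hl', hlen', hP'⟩ := ih (fun T' hT' => h T' (List.mem_cons_of_mem T hT'))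
    refine ⟨lT ++ l', ?_, ?_, ?_⟩
    · intro k
      simp only [List.map_cons, List.sum_cons, List.map_append, List.sum_append]
      rw [hlT k, hl' k]
    · simp only [List.length_append, List.length_cons]
      calc lT.length + l'.length ≤ B + B * l.length := Nat.add_le_add hlenT hlen'
        _ = B * (l.length + 1) := by ring
    · intro T' hT'
      rcases List.mem_append.mp hT' with h1 | h1
      · exact hPT T' h1
      · exact hP' T' h1

lemma expand {n m : ℕ} {a : (Fin n → ℕ) → (E →L[ℂ] E)} {lam : ℂ}
    (hU : ∀ k : Fin n → ℤ, IsUnit (lam • (1 : E →L[ℂ] E) + asymb n m a k))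
    (S : List (Fin n)) (hS : S.Nodup) :
    ∃ l : List ((Fin n → ℤ) → (E →L[ℂ] E)),
      (∀ k, (S.foldr bdiff (Rres n m a lam)) k = (l.map (fun T => T k)).sum) ∧
      l.length ≤ (2 * n + 1) ^ S.length ∧
      ∀ T ∈ l, ∃ M', M'.Perm S ∧ Good n m a lam S.length M' T := by
  induction S with
  | nil =>
    refine ⟨[fun k => Rres n m a lam (k - 0)], ?_, by simp, ?_⟩
    · intro k
      simp only [List.foldr_nil, List.map_cons, List.map_nil, List.sum_cons, List.sum_nil,
        add_zero, sub_zero]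
    · intro T hT
      rw [List.mem_singleton] at hT
      subst hT
      exact ⟨[], List.Perm.refl _, Good.base 0 (by simp)⟩
  | cons j S' ih =>
    have hjS' : j ∉ S' := (List.nodup_cons.mp hS).1
    have hS' : S'.Nodup := (List.nodup_cons.mp hS).2
    obtain ⟨l, hl, hlen, hterms⟩ := ih hS'
    have hS'n : S'.length ≤ n := le_trans hS'.length_le_card (le_of_eq (Fintype.card_fin n))
    have hstep : ∀ T ∈ l, ∃ lT : List ((Fin n → ℤ) → (E →L[ℂ] E)),
        (∀ k, bdiff j T k = (lT.map (fun T' => T' k)).sum) ∧ lT.length ≤ 2 * n + 1 ∧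
        ∀ T' ∈ lT, ∃ M', M'.Perm (j :: S') ∧ Good n m a lam (S'.length + 1) M' T' := by
      intro T hT
      obtain ⟨M', hMperm, hMgood⟩ := hterms T hT
      obtain ⟨lT, hlT, hlenT, hPT⟩ := good_bdiff hU j hMgood
      refine ⟨lT, hlT, ?_, ?_⟩
      · calc lT.length ≤ 2 * M'.length + 1 := hlenT
          _ = 2 * S'.length + 1 := by rw [hMperm.length_eq]
          _ ≤ 2 * n + 1 := by omega
      · intro T' hT'
        obtain ⟨M'', hM''perm, hM''good⟩ := hPT T' hT'
        exact ⟨M'', hM''perm.trans (List.Perm.cons j hMperm), hM''good⟩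
    obtain ⟨l', hl', hlen', hP'⟩ := expand_flat j _ (2 * n + 1) l hstep
    refine ⟨l', ?_, ?_, ?_⟩
    · intro k
      have h1 : ((j :: S').foldr bdiff (Rres n m a lam)) k
          = (S'.foldr bdiff (Rres n m a lam)) k
            - (S'.foldr bdiff (Rres n m a lam)) (k - Pi.single j 1) := rfl
      rw [h1, hl k, hl (k - Pi.single j 1), ← bdiff_list_sum, hl' k]
    · calc l'.length ≤ (2 * n + 1) * l.length := hlen'
        _ ≤ (2 * n + 1) * (2 * n + 1) ^ S'.length :=
            Nat.mul_le_mul_left _ hlen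
        _ = (2 * n + 1) ^ (j :: S').length := by
            rw [List.length_cons, pow_succ]
            ring
    · intro T hT
      exact hP' T hT
end

noncomputable def rho (n : ℕ) (k : Fin n → ℤ) : ℝ := max (znorm n k - (n : ℝ) ^ 2) 0

noncomputable def Dk (n m : ℕ) (lam : ℂ) (k : Fin n → ℤ) : ℝ :=
  rho n k ^ m + ‖lam‖

noncomputable def QQ (n m : ℕ) (κ C₀ lb0 : ℝ) : ℝ :=
  max 1 (2 * κ * (((m : ℝ) + 1) ^ n * C₀) *
    ((4 : ℝ) ^ m + (3 * (1 + (n : ℝ) + (n : ℝ) ^ 2)) ^ m / lb0))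

lemma rho_nonneg (n : ℕ) (k : Fin n → ℤ) : 0 ≤ rho n k := le_max_right _ _

lemma one_le_QQ (n m : ℕ) (κ C₀ lb0 : ℝ) : 1 ≤ QQ n m κ C₀ lb0 := le_max_left _ _

lemma znorm_small (n : ℕ) (v : Fin n → ℤ) (hv : ∀ i, |(v i : ℝ)| ≤ (n : ℝ)) :
    znorm n v ≤ (n : ℝ) ^ 2 := by
  have h1 := znorm_le n v n (Nat.cast_nonneg n) hv
  have hsq : Real.sqrt n ≤ (n : ℝ) := by
    have hcast : ((n : ℝ)) ≤ (n : ℝ) ^ 2 := by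
      have h0 : (n : ℕ) ≤ n ^ 2 := Nat.le_self_pow two_ne_zero n
      exact_mod_cast h0
    calc Real.sqrt n ≤ Real.sqrt ((n : ℝ) ^ 2) := Real.sqrt_le_sqrt hcast
      _ = (n : ℝ) := Real.sqrt_sq (Nat.cast_nonneg n)
  calc znorm n v ≤ Real.sqrt n * n := h1
    _ ≤ (n : ℝ) * n := mul_le_mul_of_nonneg_right hsq (Nat.cast_nonneg n)
    _ = (n : ℝ) ^ 2 := by ring

section
variable {E : Type*} [NormedAddCommGroup E] [NormedSpace ℂ E]

lemma rho_le_znorm_sub (n : ℕ) (k v : Fin n → ℤ) (hv : ∀ i, |(v i : ℝ)| ≤ (n : ℝ)) :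
    rho n k ≤ znorm n (k - v) := by
  apply max_le _ (znorm_nonneg n _)
  have h1 : znorm n k - znorm n v ≤ znorm n (k - v) := by
    rw [znorm_eq, znorm_eq, znorm_eq, zToR_sub]
    exact norm_sub_norm_le _ _
  have h2 := znorm_small n v hv
  linarith

lemma Rres_base_bound {n m : ℕ} {a : (Fin n → ℕ) → (E →L[ℂ] E)} {lam : ℂ} {κ : ℝ}
    (hκ : 0 < κ) (habs : 0 < ‖lam‖)
    (hRb : ∀ k', ‖Rres n m a lam k'‖ ≤ 2 * κ / (znorm n k' ^ m + ‖lam‖))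
    (k v : Fin n → ℤ) (hv : ∀ i, |(v i : ℝ)| ≤ (n : ℝ)) :
    ‖Rres n m a lam (k - v)‖ ≤ 2 * κ / Dk n m lam k := by
  refine le_trans (hRb (k - v)) ?_
  apply div_le_div_of_nonneg_left (by linarith) ?_ ?_
  · unfold Dk
    have := pow_nonneg (rho_nonneg n k) m
    linarith
  · unfold Dk
    have := pow_le_pow_left₀ (rho_nonneg n k) (rho_le_znorm_sub n k v hv) m
    linarith

lemma uu_le_C2_Dk (n m : ℕ) (lam : ℂ) (lb0 : ℝ) (hlb0 : 0 < lb0)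
    (hlam : lb0 ≤ ‖lam‖) (k : Fin n → ℤ) :
    uu n k ^ m ≤ ((4 : ℝ) ^ m + (3 * (1 + (n : ℝ) + (n : ℝ) ^ 2)) ^ m / lb0) * Dk n m lam k := by
  have hz0 : 0 ≤ znorm n k := znorm_nonneg n k
  have hc1 : (1 : ℝ) ≤ 1 + (n : ℝ) + (n : ℝ) ^ 2 := by
    have h0 : (0:ℝ) ≤ (n:ℝ) := Nat.cast_nonneg n
    nlinarith
  set c1 : ℝ := 1 + (n : ℝ) + (n : ℝ) ^ 2 with hc1def
  set z : ℝ := znorm n k with hzdef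
  have huu : uu n k = c1 + z := rfl
  have habs : 0 < ‖lam‖ := lt_of_lt_of_le hlb0 hlam
  have hDk0 : 0 ≤ Dk n m lam k := by
    unfold Dk
    have := pow_nonneg (rho_nonneg n k) m
    linarith
  have hX0 : 0 ≤ (3 * c1) ^ m / lb0 := by positivity
  by_cases hz : 2 * c1 ≤ z
  · -- large |k| : uu ≤ 3 * rho
    have hn2c1 : (n : ℝ) ^ 2 ≤ c1 := by rw [hc1def]; linarith [Nat.cast_nonneg (α := ℝ) n]
    have hrho : rho n k = z - (n : ℝ) ^ 2 := max_eq_left (by linarith)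
    have h3 : uu n k ≤ 3 * rho n k := by
      rw [huu, hrho]
      linarith
    have h4 : uu n k ^ m ≤ (3 * rho n k) ^ m :=
      pow_le_pow_left₀ (by rw [huu]; linarith) h3 m
    have h5 : (3 * rho n k) ^ m ≤ (4 : ℝ) ^ m * rho n k ^ m := by
      rw [mul_pow]
      apply mul_le_mul_of_nonneg_right _ (pow_nonneg (rho_nonneg n k) m)
      exact pow_le_pow_left₀ (by norm_num) (by norm_num) m
    have h6 : rho n k ^ m ≤ Dk n m lam k := by
      unfold Dk
      linarith
    calc uu n k ^ m ≤ (4 : ℝ) ^ m * rho n k ^ m := le_trans h4 h5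
      _ ≤ (4 : ℝ) ^ m * Dk n m lam k :=
          mul_le_mul_of_nonneg_left h6 (by positivity)
      _ ≤ ((4 : ℝ) ^ m + (3 * c1) ^ m / lb0) * Dk n m lam k := by
          apply mul_le_mul_of_nonneg_right _ hDk0
          linarith
  · -- small |k|
    push_neg at hz
    have h3 : uu n k ≤ 3 * c1 := by rw [huu]; linarith
    have h4 : uu n k ^ m ≤ (3 * c1) ^ m :=
      pow_le_pow_left₀ (by rw [huu]; linarith) h3 m
    have h5 : (3 * c1) ^ m = ((3 * c1) ^ m / lb0) * lb0 := by
      field_simp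
    have h6 : ((3 * c1) ^ m / lb0) * lb0 ≤ ((3 * c1) ^ m / lb0) * Dk n m lam k := by
      apply mul_le_mul_of_nonneg_left _ hX0
      unfold Dk
      have := pow_nonneg (rho_nonneg n k) m
      linarith
    calc uu n k ^ m ≤ ((3 * c1) ^ m / lb0) * Dk n m lam k := by
          rw [← h5] at h6
          linarith
      _ ≤ ((4 : ℝ) ^ m + (3 * c1) ^ m / lb0) * Dk n m lam k := by
          apply mul_le_mul_of_nonneg_right _ hDk0
          have : (0:ℝ) ≤ (4:ℝ) ^ m := by positivity
          linarith

lemma good_norm {n m : ℕ} {a : (Fin n → ℕ) → (E →L[ℂ] E)} {lam : ℂ} {κ C₀ lb0 : ℝ}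
    (hκ : 0 < κ) (hC₀ : 0 ≤ C₀) (hlb0 : 0 < lb0) (hlam : lb0 ≤ ‖lam‖)
    (ha : ∑ α ∈ multiIdxLe n m, ‖a α‖ ≤ C₀)
    (hRb : ∀ k', ‖Rres n m a lam k'‖ ≤ 2 * κ / (znorm n k' ^ m + ‖lam‖))
    {c : ℕ} (hc : c ≤ n) {M : List (Fin n)} {F : (Fin n → ℤ) → (E →L[ℂ] E)}
    (hG : Good n m a lam c M F) (hMnd : M.Nodup) (k : Fin n → ℤ) :
    uu n k ^ M.length * ‖F k‖ ≤
      (2 * κ / Dk n m lam k) * (QQ n m κ C₀ lb0) ^ M.length := by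
  have habs : 0 < ‖lam‖ := lt_of_lt_of_le hlb0 hlam
  have hDk : 0 < Dk n m lam k := by
    unfold Dk
    have := pow_nonneg (rho_nonneg n k) m
    linarith
  have hRB0 : 0 ≤ 2 * κ / Dk n m lam k := by positivity
  have hQ1 : 1 ≤ QQ n m κ C₀ lb0 := one_le_QQ n m κ C₀ lb0
  have hQ0 : 0 ≤ QQ n m κ C₀ lb0 := le_trans zero_le_one hQ1
  have hu1 : 1 ≤ uu n k := one_le_uu n k
  have hu0 : 0 ≤ uu n k := le_trans zero_le_one hu1
  have hCG0 : 0 ≤ ((m : ℝ) + 1) ^ n * C₀ := by positivity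
  have hkey : (2 * κ / Dk n m lam k) * ((((m : ℝ) + 1) ^ n * C₀) * uu n k ^ m)
      ≤ QQ n m κ C₀ lb0 := by
    have h1 := uu_le_C2_Dk n m lam lb0 hlb0 hlam k
    have h2 : (2 * κ / Dk n m lam k) * ((((m : ℝ) + 1) ^ n * C₀) * uu n k ^ m)
        ≤ (2 * κ / Dk n m lam k) * ((((m : ℝ) + 1) ^ n * C₀) *
          (((4 : ℝ) ^ m + (3 * (1 + (n : ℝ) + (n : ℝ) ^ 2)) ^ m / lb0) * Dk n m lam k)) := by
      apply mul_le_mul_of_nonneg_left _ hRB0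
      exact mul_le_mul_of_nonneg_left h1 hCG0
    have h3 : (2 * κ / Dk n m lam k) * ((((m : ℝ) + 1) ^ n * C₀) *
        (((4 : ℝ) ^ m + (3 * (1 + (n : ℝ) + (n : ℝ) ^ 2)) ^ m / lb0) * Dk n m lam k))
        = 2 * κ * (((m : ℝ) + 1) ^ n * C₀) *
          ((4 : ℝ) ^ m + (3 * (1 + (n : ℝ) + (n : ℝ) ^ 2)) ^ m / lb0) := by
      field_simp
    calc (2 * κ / Dk n m lam k) * ((((m : ℝ) + 1) ^ n * C₀) * uu n k ^ m)
        ≤ 2 * κ * (((m : ℝ) + 1) ^ n * C₀) *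
          ((4 : ℝ) ^ m + (3 * (1 + (n : ℝ) + (n : ℝ) ^ 2)) ^ m / lb0) := by
          rw [h3] at h2
          exact h2
      _ ≤ QQ n m κ C₀ lb0 := le_max_right _ _
  revert hMnd
  induction hG with
  | base v hv =>
    intro _
    simp only [List.length_nil, pow_zero, one_mul, mul_one]
    exact Rres_base_bound hκ habs hRb k v
      (fun i => le_trans (hv i) (Nat.cast_le.mpr hc))
  | cons v w ε L M F hv hw hε hL hF ih =>
    intro hnd
    obtain ⟨hndL, hndM, _⟩ := List.nodup_append.mp hnd
    have ihM := ih hndM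
    have hgf := gfun_bound n m a C₀ ha L hndL w
      (fun i => le_trans (hw i) (Nat.cast_le.mpr hc)) k
    have hRv := Rres_base_bound hκ habs hRb k v
      (fun i => le_trans (hv i) (Nat.cast_le.mpr hc))
    have h1L : 1 ≤ L.length := List.length_pos_iff.mpr hL
    calc uu n k ^ (L ++ M).length *
          ‖Rres n m a lam (k - v) * (ε • gfun n m a L w k * F k)‖
        = (uu n k ^ L.length * uu n k ^ M.length) *
            ‖Rres n m a lam (k - v) * (ε • gfun n m a L w k * F k)‖ := by
          rw [List.length_append, pow_add]
      _ ≤ (uu n k ^ L.length * uu n k ^ M.length) *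
            (‖Rres n m a lam (k - v)‖ * (‖gfun n m a L w k‖ * ‖F k‖)) := by
          apply mul_le_mul_of_nonneg_left _ (by positivity)
          calc ‖Rres n m a lam (k - v) * (ε • gfun n m a L w k * F k)‖
              ≤ ‖Rres n m a lam (k - v)‖ * ‖ε • gfun n m a L w k * F k‖ := norm_mul_le _ _
            _ ≤ ‖Rres n m a lam (k - v)‖ * (‖ε • gfun n m a L w k‖ * ‖F k‖) :=
                mul_le_mul_of_nonneg_left (norm_mul_le _ _) (norm_nonneg _)
            _ = ‖Rres n m a lam (k - v)‖ * (‖gfun n m a L w k‖ * ‖F k‖) := by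
                have hns : ‖ε • gfun n m a L w k‖ = ‖ε‖ * ‖gfun n m a L w k‖ :=
                  norm_smul ε (gfun n m a L w k)
                rw [hns, hε, one_mul]
      _ = ‖Rres n m a lam (k - v)‖ *
            ((uu n k ^ L.length * ‖gfun n m a L w k‖) * (uu n k ^ M.length * ‖F k‖)) := by
          ring
      _ ≤ (2 * κ / Dk n m lam k) *
            (((((m : ℝ) + 1) ^ n * C₀) * uu n k ^ m) *
              ((2 * κ / Dk n m lam k) * (QQ n m κ C₀ lb0) ^ M.length)) := by
          apply mul_le_mul hRv _ _ hRB0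
          · apply mul_le_mul _ ihM (by positivity) (by positivity)
            calc uu n k ^ L.length * ‖gfun n m a L w k‖
                ≤ (((m : ℝ) + 1) ^ n * C₀) * uu n k ^ m := hgf
              _ = (((m : ℝ) + 1) ^ n * C₀) * uu n k ^ m := rfl
          · positivity
      _ = ((2 * κ / Dk n m lam k) * ((((m : ℝ) + 1) ^ n * C₀) * uu n k ^ m)) *
            ((2 * κ / Dk n m lam k) * (QQ n m κ C₀ lb0) ^ M.length) := by ring
      _ ≤ QQ n m κ C₀ lb0 * ((2 * κ / Dk n m lam k) * (QQ n m κ C₀ lb0) ^ M.length) := by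
          apply mul_le_mul_of_nonneg_right hkey (by positivity)
      _ = (2 * κ / Dk n m lam k) * (QQ n m κ C₀ lb0) ^ (M.length + 1) := by
          rw [pow_succ]
          ring
      _ ≤ (2 * κ / Dk n m lam k) * (QQ n m κ C₀ lb0) ^ (L ++ M).length := by
          apply mul_le_mul_of_nonneg_left _ hRB0
          apply pow_le_pow_right₀ hQ1
          rw [List.length_append]
          omega
end


noncomputable def lam0 (om th : ℝ) : ℝ :=
  if th ≤ Real.pi / 2 then om else min (om / 2) (om * Real.sin th / 2)

lemma lam0_pos (om th : ℝ) (hom : 0 < om) (hth : th < Real.pi) : 0 < lam0 om th := by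
  unfold lam0
  split_ifs with h
  · exact hom
  · push_neg at h
    have hsin : 0 < Real.sin th :=
      Real.sin_pos_of_pos_of_lt_pi (by linarith [Real.pi_pos]) hth
    exact lt_min (by linarith) (by positivity)

lemma lam0_le_abs (om th : ℝ) (hom : 0 < om) (hth0 : 0 ≤ th) (hth : th < Real.pi)
    (lam : ℂ) (hlam : ∃ μ ∈ sector th, lam = (om : ℂ) + μ) :
    lam0 om th ≤ ‖lam‖ := by
  have hlam0om : lam0 om th ≤ om := by
    unfold lam0
    split_ifs with h
    · exact le_refl om
    · exact le_trans (min_le_left _ _) (by linarith)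
  obtain ⟨μ, hμ, rfl⟩ := hlam
  rcases hμ with harg | h0
  · have harg : |Complex.arg μ| ≤ th := harg
    have hre_lam : ((om : ℂ) + μ).re = om + μ.re := by simp
    have him_lam : ((om : ℂ) + μ).im = μ.im := by simp
    by_cases hth2 : th ≤ Real.pi / 2
    · have hre : 0 ≤ μ.re := Complex.abs_arg_le_pi_div_two_iff.mp (le_trans harg hth2)
      calc lam0 om th ≤ om := hlam0om
        _ ≤ ((om : ℂ) + μ).re := by rw [hre_lam]; linarith
        _ ≤ ‖(om : ℂ) + μ‖ := Complex.re_le_norm _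
    · push_neg at hth2
      by_cases hre : -(om / 2) ≤ μ.re
      · calc lam0 om th ≤ om / 2 := by
              unfold lam0
              rw [if_neg (by linarith)]
              exact min_le_left _ _
          _ ≤ ((om : ℂ) + μ).re := by rw [hre_lam]; linarith
          _ ≤ ‖(om : ℂ) + μ‖ := Complex.re_le_norm _
      · push_neg at hre
        have hμ0 : μ ≠ 0 := by
          intro h
          rw [h] at hre
          simp at hre
          linarith
        have habsμ : om / 2 ≤ ‖μ‖ := by
          have h1 : |μ.re| ≤ ‖μ‖ := Complex.abs_re_le_norm μ
          have h2 : om / 2 ≤ |μ.re| := by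
            rw [abs_of_neg (by linarith)]
            linarith
          linarith
        have hargπ : |μ.arg| ≤ Real.pi := Complex.abs_arg_le_pi μ
        have harg2 : Real.pi / 2 < |μ.arg| := by
          by_contra hcon
          push_neg at hcon
          have := Complex.abs_arg_le_pi_div_two_iff.mp hcon
          linarith
        have hsinθpos : 0 ≤ Real.sin th :=
          Real.sin_nonneg_of_nonneg_of_le_pi hth0 (le_of_lt hth)
        have hsin : Real.sin th ≤ Real.sin |μ.arg| := by
          rw [← Real.sin_pi_sub th, ← Real.sin_pi_sub |μ.arg|]
          apply Real.strictMonoOn_sin.monotoneOn ?_ ?_ (by linarith)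
          · constructor
            · linarith [Real.pi_pos]
            · linarith
          · constructor
            · linarith [Real.pi_pos]
            · linarith
        have habs0 : (0 : ℝ) < ‖μ‖ := by
          have := norm_pos_iff.mpr hμ0
          exact this
        have h1 : μ.im = ‖μ‖ * Real.sin μ.arg := by
          rw [Complex.sin_arg]
          field_simp
        have h2 : |μ.im| = ‖μ‖ * |Real.sin μ.arg| := by
          rw [h1, abs_mul, abs_of_pos habs0]
        have h3 : Real.sin |μ.arg| ≤ |Real.sin μ.arg| := by
          rcases abs_cases μ.arg with ⟨he, _⟩ | ⟨he, _⟩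
          · rw [he]
            exact le_abs_self _
          · rw [he, Real.sin_neg]
            exact neg_le_abs _
        have him : om / 2 * Real.sin th ≤ |μ.im| := by
          calc om / 2 * Real.sin th ≤ ‖μ‖ * Real.sin |μ.arg| :=
                mul_le_mul habsμ hsin hsinθpos (le_of_lt habs0)
            _ ≤ ‖μ‖ * |Real.sin μ.arg| :=
                mul_le_mul_of_nonneg_left h3 (le_of_lt habs0)
            _ = |μ.im| := h2.symm
        calc lam0 om th ≤ om * Real.sin th / 2 := by
              unfold lam0
              rw [if_neg (by linarith)]
              exact min_le_right _ _
          _ = om / 2 * Real.sin th := by ring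
          _ ≤ |μ.im| := him
          _ = |((om : ℂ) + μ).im| := by rw [him_lam]
          _ ≤ ‖(om : ℂ) + μ‖ := Complex.abs_im_le_norm _
  · have h0 : μ = 0 := h0
    subst h0
    have : ‖(om : ℂ) + 0‖ = om := by
      rw [add_zero, Complex.norm_real, Real.norm_eq_abs, abs_of_pos hom]
    rw [this]
    exact hlam0om

lemma znorm_le_uu (n : ℕ) (k : Fin n → ℤ) : znorm n k ≤ uu n k := by
  unfold uu
  have h0 : (0:ℝ) ≤ (n:ℝ) := Nat.cast_nonneg n
  nlinarith

lemma list_mul_sum_real (c : ℝ) (l : List ℝ) : c * l.sum = (l.map (fun x => c * x)).sum := by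
  induction l with
  | nil => simp
  | cons x l ih => simp only [List.sum_cons, List.map_cons, mul_add, ih]

lemma filter_length_eq (n : ℕ) (γ : Fin n → Bool) :
    ((List.finRange n).filter (fun j => γ j)).length = (∑ i, if γ i then 1 else 0 : ℕ) := by
  rw [← Finset.card_filter, Finset.card, Fin.univ_def, Finset.filter_val,
    ← Multiset.countP_eq_card_filter, Multiset.coe_countP, List.countP_eq_length_filter]
  congr 1
  simp

end St18

/-- The key estimate in the proof of Proposition 6.4: for the resolvent symbol
`M_λ(k) = λ(λI + a(k))⁻¹`, the quantities `|k|^{|γ|} ‖Δ^γ M_λ(k)‖` are bounded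
uniformly in `λ ∈ ω₀ + Σ_θ`, `k ∈ ℤⁿ` and `γ ∈ {0,1}ⁿ`. -/
theorem statement18 (n m : ℕ) (hn : 0 < n) (hm : 0 < m) (E : Type*)
    [NormedAddCommGroup E] [NormedSpace ℂ E] (κ : ℝ) (hκ : 1 ≤ κ) (ω₀ : ℝ) (hω₀ : 0 < ω₀)
    (θ : ℝ) (hθ0 : 0 ≤ θ) (hθπ : θ < Real.pi)
    (a : (Fin n → ℕ) → (E →L[ℂ] E)) (C₀ : ℝ)
    (ha : ∑ α ∈ multiIdxLe n m, ‖a α‖ ≤ C₀)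
    (hres : ∀ lam : ℂ, (∃ μ ∈ sector θ, lam = (ω₀ : ℂ) + μ) →
      ∀ ξ : EuclideanSpace ℝ (Fin n),
        IsUnit (lam • (1 : E →L[ℂ] E) + opSymbol (multiIdxLe n m) a ξ) ∧
        ‖Ring.inverse (lam • (1 : E →L[ℂ] E) + opSymbol (multiIdxLe n m) a ξ)‖ ≤
          2 * κ / (‖ξ‖ ^ m + ‖lam‖)) :
    ∃ C > (0 : ℝ), ∀ lam : ℂ, (∃ μ ∈ sector θ, lam = (ω₀ : ℂ) + μ) →
      ∀ (k : Fin n → ℤ) (γ : Fin n → Bool),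
        znorm n k ^ (∑ i, if γ i then 1 else 0 : ℕ) *
          ‖bdiffGamma γ (fun k' =>
              lam • Ring.inverse (lam • (1 : E →L[ℂ] E) +
                opSymbol (multiIdxLe n m) a (zToR n k'))) k‖ ≤ C := by
  classical
  have hC0 : (0:ℝ) ≤ C₀ := le_trans (Finset.sum_nonneg (fun α _ => norm_nonneg _)) ha
  have hκ0 : (0:ℝ) < κ := lt_of_lt_of_le one_pos hκ
  have hlb0 : 0 < St18.lam0 ω₀ θ := St18.lam0_pos ω₀ θ hω₀ hθπ
  have hQ1 : 1 ≤ St18.QQ n m κ C₀ (St18.lam0 ω₀ θ) := St18.one_le_QQ n m κ C₀ (St18.lam0 ω₀ θ)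
  have hQ0 : 0 ≤ St18.QQ n m κ C₀ (St18.lam0 ω₀ θ) := le_trans zero_le_one hQ1
  refine ⟨(2 * (n : ℝ) + 1) ^ n * (2 * κ * St18.QQ n m κ C₀ (St18.lam0 ω₀ θ) ^ n), ?_, ?_⟩
  · apply mul_pos
    · apply pow_pos
      have : (0:ℝ) ≤ (n:ℝ) := Nat.cast_nonneg n
      linarith
    · apply mul_pos (by linarith)
      exact pow_pos (lt_of_lt_of_le one_pos hQ1) n
  intro lam hlamreg k γ
  have hU : ∀ k' : Fin n → ℤ, IsUnit (lam • (1 : E →L[ℂ] E) + St18.asymb n m a k') :=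
    fun k' => (hres lam hlamreg (zToR n k')).1
  have hRb : ∀ k' : Fin n → ℤ,
      ‖St18.Rres n m a lam k'‖ ≤ 2 * κ / (znorm n k' ^ m + ‖lam‖) := by
    intro k'
    have h := (hres lam hlamreg (zToR n k')).2
    rw [St18.znorm_eq]
    exact h
  have hlam_lb : St18.lam0 ω₀ θ ≤ ‖lam‖ :=
    St18.lam0_le_abs ω₀ θ hω₀ hθ0 hθπ lam hlamreg
  have habs : 0 < ‖lam‖ := lt_of_lt_of_le hlb0 hlam_lb
  have hSnd : ((List.finRange n).filter (fun j => γ j)).Nodup :=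
    (List.nodup_finRange n).filter _
  have hSn : ((List.finRange n).filter (fun j => γ j)).length ≤ n :=
    le_trans hSnd.length_le_card (le_of_eq (Fintype.card_fin n))
  obtain ⟨l, hl, hlen, hterms⟩ := St18.expand hU ((List.finRange n).filter (fun j => γ j)) hSnd
  have hexp : (∑ i, if γ i then 1 else 0 : ℕ)
      = ((List.finRange n).filter (fun j => γ j)).length := (St18.filter_length_eq n γ).symm
  rw [hexp]
  have key : bdiffGamma γ (fun k' => lam • Ring.inverse (lam • (1 : E →L[ℂ] E) +
        opSymbol (multiIdxLe n m) a (zToR n k'))) k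
      = lam • (((List.finRange n).filter (fun j => γ j)).foldr bdiff (St18.Rres n m a lam)) k :=
    congrFun (St18.foldr_bdiff_smul ((List.finRange n).filter (fun j => γ j)) lam
      (St18.Rres n m a lam)) k
  rw [key, hl k]
  have hns : ‖lam • (l.map (fun T => T k)).sum‖
      = ‖lam‖ * ‖(l.map (fun T => T k)).sum‖ := by
    have h := norm_smul lam ((l.map (fun T => T k)).sum)
    exact h
  rw [hns]
  have hzu : znorm n k ≤ St18.uu n k := St18.znorm_le_uu n k
  have hz0 : 0 ≤ znorm n k := St18.znorm_nonneg n k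
  have hu0 : (0:ℝ) ≤ St18.uu n k := le_trans zero_le_one (St18.one_le_uu n k)
  have hDk : 0 < St18.Dk n m lam k := by
    unfold St18.Dk
    have := pow_nonneg (St18.rho_nonneg n k) m
    linarith
  have hlamDk : ‖lam‖ ≤ St18.Dk n m lam k := by
    unfold St18.Dk
    have := pow_nonneg (St18.rho_nonneg n k) m
    linarith
  have hterm_bound : ∀ T ∈ l,
      (‖lam‖ * St18.uu n k ^ ((List.finRange n).filter (fun j => γ j)).length) * ‖T k‖
        ≤ 2 * κ * St18.QQ n m κ C₀ (St18.lam0 ω₀ θ) ^ n := by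
    intro T hT
    obtain ⟨M', hperm, hgood⟩ := hterms T hT
    have hM'nd : M'.Nodup := hperm.nodup_iff.mpr hSnd
    have h1 := St18.good_norm hκ0 hC0 hlb0 hlam_lb ha hRb hSn hgood hM'nd k
    rw [hperm.length_eq] at h1
    calc (‖lam‖ * St18.uu n k ^ ((List.finRange n).filter (fun j => γ j)).length) * ‖T k‖
        = ‖lam‖ *
            (St18.uu n k ^ ((List.finRange n).filter (fun j => γ j)).length * ‖T k‖) := by ring
      _ ≤ ‖lam‖ * ((2 * κ / St18.Dk n m lam k) *
            St18.QQ n m κ C₀ (St18.lam0 ω₀ θ) ^ ((List.finRange n).filter (fun j => γ j)).length) :=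
          mul_le_mul_of_nonneg_left h1 (le_of_lt habs)
      _ = (‖lam‖ / St18.Dk n m lam k) *
            (2 * κ * St18.QQ n m κ C₀ (St18.lam0 ω₀ θ) ^
              ((List.finRange n).filter (fun j => γ j)).length) := by ring
      _ ≤ 1 * (2 * κ * St18.QQ n m κ C₀ (St18.lam0 ω₀ θ) ^
            ((List.finRange n).filter (fun j => γ j)).length) := by
          apply mul_le_mul_of_nonneg_right ((div_le_one hDk).mpr hlamDk) (by positivity)
      _ = 2 * κ * St18.QQ n m κ C₀ (St18.lam0 ω₀ θ) ^
            ((List.finRange n).filter (fun j => γ j)).length := one_mul _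
      _ ≤ 2 * κ * St18.QQ n m κ C₀ (St18.lam0 ω₀ θ) ^ n := by
          apply mul_le_mul_of_nonneg_left (pow_le_pow_right₀ hQ1 hSn) (by linarith)
  calc znorm n k ^ ((List.finRange n).filter (fun j => γ j)).length *
        (‖lam‖ * ‖(l.map (fun T => T k)).sum‖)
      ≤ St18.uu n k ^ ((List.finRange n).filter (fun j => γ j)).length *
        (‖lam‖ * ‖(l.map (fun T => T k)).sum‖) := by
        apply mul_le_mul_of_nonneg_right (pow_le_pow_left₀ hz0 hzu _) (by positivity)
    _ ≤ St18.uu n k ^ ((List.finRange n).filter (fun j => γ j)).length *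
        (‖lam‖ * (l.map (fun T => ‖T k‖)).sum) := by
        apply mul_le_mul_of_nonneg_left
          (mul_le_mul_of_nonneg_left (St18.list_norm_sum_le l k) (le_of_lt habs)) (by positivity)
    _ = (‖lam‖ * St18.uu n k ^ ((List.finRange n).filter (fun j => γ j)).length) *
          (l.map (fun T => ‖T k‖)).sum := by ring
    _ = (l.map (fun T => (‖lam‖ *
          St18.uu n k ^ ((List.finRange n).filter (fun j => γ j)).length) * ‖T k‖)).sum := by
        rw [St18.list_mul_sum_real, List.map_map]
        rfl
    _ ≤ (l.map (fun T => (‖lam‖ *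
          St18.uu n k ^ ((List.finRange n).filter (fun j => γ j)).length) * ‖T k‖)).length •
          (2 * κ * St18.QQ n m κ C₀ (St18.lam0 ω₀ θ) ^ n) := by
        apply List.sum_le_card_nsmul
        intro x hx
        obtain ⟨T, hT, rfl⟩ := List.mem_map.mp hx
        exact hterm_bound T hT
    _ = (l.length : ℝ) * (2 * κ * St18.QQ n m κ C₀ (St18.lam0 ω₀ θ) ^ n) := by
        rw [List.length_map, nsmul_eq_mul]
    _ ≤ (2 * (n : ℝ) + 1) ^ n * (2 * κ * St18.QQ n m κ C₀ (St18.lam0 ω₀ θ) ^ n) := by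
        apply mul_le_mul_of_nonneg_right _ (by positivity)
        have h1 : l.length ≤ (2 * n + 1) ^ n :=
          le_trans hlen (Nat.pow_le_pow_right (by omega) hSn)
        calc (l.length : ℝ) ≤ (((2 * n + 1) ^ n : ℕ) : ℝ) := Nat.cast_le.mpr h1
          _ = (2 * (n : ℝ) + 1) ^ n := by push_cast; ring
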